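/- Let T > 0 and u₀ ∈ L¹(ℝ³) ∩ L³(ℝ³). Suppose u : [0,T] × ℝ³ → ℝ is measurable, t ↦ u(t,·) is continuous from [0,T] into L³(ℝ³) with u(0,·) = u₀, and u is a mild solution of the cubic heat equation on [0,T] with initial data u₀. Then for every t ∈ [0,T], u(t,·) ∈ L¹(ℝ³), and moreover ‖u(t,·)‖_{L¹} ≤ ‖u₀‖_{L¹} + ∫₀ᵗ ‖u(s,·)‖_{L³}³ ds. -/

import Mathlib

/-!
The heat kernel is a probability density, so convolution with it is a contraction of `L¹`
(Young's inequality with one factor in `L¹`). In the mild formulation this bounds the free part by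
`‖u₀‖₁` and, after Minkowski's integral inequality, the Duhamel term by
`∫₀ᵗ ‖u(s)³‖₁ ds = ∫₀ᵗ ‖u(s)‖₃³ ds`. Continuity of `s ↦ u(s)` in `L³` bounds `‖u(s)‖₃` on the
compact `[0, T]`, so the right-hand side is finite and `u(t) ∈ L¹`.
-/

open MeasureTheory

noncomputable section

/-- `ℝ³` as Euclidean space. -/
abbrev E3 := EuclideanSpace ℝ (Fin 3)

/-- The heat kernel `G_t(x) = (4πt)^{-3/2} exp(-|x|²/(4t))` on `ℝ³`. -/
def heatKernel (t : ℝ) : E3 → ℝ := fun x =>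
  (4 * Real.pi * t) ^ (-(3 : ℝ) / 2) * Real.exp (-‖x‖ ^ 2 / (4 * t))

/-- Convolution of two real valued functions on `ℝ³` w.r.t. Lebesgue measure. -/
def conv (f g : E3 → ℝ) : E3 → ℝ :=
  MeasureTheory.convolution f g (ContinuousLinearMap.mul ℝ ℝ) volume

/-- `u` is a mild solution of the cubic heat equation on `[0, T]` with initial data `u₀`. -/
def IsMildSolution (T : ℝ) (u₀ : E3 → ℝ) (u : ℝ → E3 → ℝ) : Prop :=
  ∀ t ∈ Set.Ioc (0 : ℝ) T, ∀ᵐ x : E3,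
    u t x = conv (heatKernel t) u₀ x +
      ∫ s in Set.Ioo (0 : ℝ) t, conv (heatKernel (t - s)) (fun y => u s y ^ 3) x

/-- The map `t ↦ u(t,·)` is continuous from `S` into `L^p(ℝ³)`. -/
def ContinuousInLp (p : ENNReal) (S : Set ℝ) (u : ℝ → E3 → ℝ) : Prop :=
  (∀ t ∈ S, MemLp (u t) p volume) ∧
  ∀ t₀ ∈ S, Filter.Tendsto (fun t => eLpNorm (u t - u t₀) p volume)
    (nhdsWithin t₀ S) (nhds 0)

open Set Filter Topology ENNReal Convolution

section Convolution

variable {G : Type*} [MeasurableSpace G] [AddGroup G] {μ : Measure G} [SFinite μ]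

theorem MeasureTheory.AEStronglyMeasurable.convolution_mul [MeasurableAdd₂ G] [MeasurableNeg G]
    [μ.IsAddRightInvariant] {f g : G → ℝ} (hf : AEStronglyMeasurable f μ)
    (hg : AEStronglyMeasurable g μ) :
    AEStronglyMeasurable (f ⋆[ContinuousLinearMap.mul ℝ ℝ, μ] g) μ :=
  (hf.convolution_integrand (ContinuousLinearMap.mul ℝ ℝ) hg).integral_prod_right' (E := ℝ)

theorem eLpNorm_one_convolution_mul_le [MeasurableAdd₂ G] [MeasurableNeg G]
    [μ.IsAddRightInvariant] {f g : G → ℝ} (hf : AEStronglyMeasurable f μ)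
    (hg : AEStronglyMeasurable g μ) :
    eLpNorm (f ⋆[ContinuousLinearMap.mul ℝ ℝ, μ] g) 1 μ ≤ eLpNorm f 1 μ * eLpNorm g 1 μ := by
  have hprod := (hf.convolution_integrand (ContinuousLinearMap.mul ℝ ℝ) hg).enorm
  simp only [ContinuousLinearMap.mul_apply', enorm_mul] at hprod
  simp only [eLpNorm_one_eq_lintegral_enorm, convolution_def, ContinuousLinearMap.mul_apply']
  calc ∫⁻ x, ‖∫ t, f t * g (x - t) ∂μ‖ₑ ∂μ
      ≤ ∫⁻ x, ∫⁻ t, ‖f t‖ₑ * ‖g (x - t)‖ₑ ∂μ ∂μ := lintegral_mono fun x => by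
        simpa only [enorm_mul] using enorm_integral_le_lintegral_enorm (fun t => f t * g (x - t))
    _ = ∫⁻ t, ∫⁻ x, ‖f t‖ₑ * ‖g (x - t)‖ₑ ∂μ ∂μ := lintegral_lintegral_swap hprod
    _ = ∫⁻ t, ‖f t‖ₑ * ∫⁻ x, ‖g x‖ₑ ∂μ ∂μ := by
        congr 1 with t
        rw [lintegral_const_mul' _ _ enorm_ne_top, lintegral_sub_right_eq_self (‖g ·‖ₑ)]
    _ = (∫⁻ t, ‖f t‖ₑ ∂μ) * ∫⁻ x, ‖g x‖ₑ ∂μ := lintegral_mul_const'' _ hf.enorm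

theorem measurable_convolution_mul_uncurry [MeasurableSub₂ G] {Y : Type*} [MeasurableSpace Y]
    {K F : Y → G → ℝ}
    (hK : Measurable (Function.uncurry K)) (hF : Measurable (Function.uncurry F)) :
    Measurable fun p : G × Y => (K p.2 ⋆[ContinuousLinearMap.mul ℝ ℝ, μ] F p.2) p.1 := by
  have hint : Measurable fun q : (G × Y) × G => K q.1.2 q.2 * F q.1.2 (q.1.1 - q.2) :=
    (hK.comp (measurable_fst.snd.prodMk measurable_snd)).mul
      (hF.comp (measurable_fst.snd.prodMk (measurable_fst.fst.sub measurable_snd)))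
  simpa only [convolution_def, ContinuousLinearMap.mul_apply']
    using (hint.stronglyMeasurable.integral_prod_right' (ν := μ)).measurable

end Convolution

theorem eLpNorm_one_integral_le {α β : Type*} [MeasurableSpace α] [MeasurableSpace β]
    {μ : Measure α} {ν : Measure β} [SFinite μ] [SFinite ν] {F : α → β → ℝ}
    (hF : AEStronglyMeasurable (Function.uncurry F) (μ.prod ν)) :
    eLpNorm (fun x => ∫ y, F x y ∂ν) 1 μ ≤ ∫⁻ y, eLpNorm (F · y) 1 μ ∂ν := by
  simp only [eLpNorm_one_eq_lintegral_enorm]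
  exact (lintegral_mono fun x => enorm_integral_le_lintegral_enorm _).trans_eq
    (lintegral_lintegral_swap hF.enorm)

theorem eLpNorm_one_pow {α : Type*} [MeasurableSpace α] {μ : Measure α} (f : α → ℝ) {n : ℕ}
    (hn : n ≠ 0) : eLpNorm (fun x => f x ^ n) 1 μ = eLpNorm f n μ ^ n := by
  have h := eLpNorm_norm_rpow f (p := 1) (μ := μ) (q := n) (by positivity)
  simp only [one_mul, ofReal_natCast, Real.rpow_natCast, ENNReal.rpow_natCast] at h
  rw [← h]
  exact eLpNorm_congr_norm_ae (ae_of_all _ fun x => by simp [norm_pow])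

theorem measurable_uncurry_heatKernel : Measurable (Function.uncurry heatKernel) := by
  unfold heatKernel
  fun_prop

theorem integral_heatKernel {t : ℝ} (ht : 0 < t) : ∫ x, heatKernel t x = 1 := by
  have hb : 0 < 1 / (4 * t) := by positivity
  have hexp : ∀ x : E3, -‖x‖ ^ 2 / (4 * t) = -(1 / (4 * t)) * ‖x‖ ^ 2 := fun x => by ring
  simp only [heatKernel, integral_const_mul, hexp]
  rw [GaussianFourier.integral_rexp_neg_mul_sq_norm hb, finrank_euclideanSpace_fin,
    show Real.pi / (1 / (4 * t)) = 4 * Real.pi * t by field_simp, ← Real.rpow_add (by positivity)]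
  norm_num

theorem eLpNorm_one_heatKernel {t : ℝ} (ht : 0 < t) : eLpNorm (heatKernel t) 1 volume = 1 := by
  have hint : Integrable (heatKernel t) := .of_integral_ne_zero (by simp [integral_heatKernel ht])
  have hpos : 0 ≤ heatKernel t := fun x => by unfold heatKernel; positivity
  rw [eLpNorm_one_eq_lintegral_enorm, ← ofReal_integral_norm_eq_lintegral_enorm hint]
  simp [Real.norm_of_nonneg (hpos _), integral_heatKernel ht]

theorem eLpNorm_one_conv_heatKernel_le {t : ℝ} (ht : 0 < t) {f : E3 → ℝ}
    (hf : AEStronglyMeasurable f volume) :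
    eLpNorm (conv (heatKernel t) f) 1 volume ≤ eLpNorm f 1 volume := by
  simpa [conv, eLpNorm_one_heatKernel ht] using eLpNorm_one_convolution_mul_le (f := heatKernel t)
    (measurable_uncurry_heatKernel.of_uncurry_left.aestronglyMeasurable) hf

namespace ContinuousInLp

variable {p : ℝ≥0∞} {u : ℝ → E3 → ℝ}

theorem continuousOn_eLpNorm (hp : 1 ≤ p) {S : Set ℝ} (hu : ContinuousInLp p S u) :
    ContinuousOn (fun t => eLpNorm (u t) p volume) S := by
  intro t₀ ht₀
  have hmeas : ∀ t ∈ S, AEStronglyMeasurable (u t) volume := fun t ht => (hu.1 t ht).1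
  have hdist := hu.2 t₀ ht₀
  have hupper : ∀ᶠ t in 𝓝[S] t₀,
      eLpNorm (u t) p volume ≤ eLpNorm (u t₀) p volume + eLpNorm (u t - u t₀) p volume := by
    filter_upwards [self_mem_nhdsWithin] with t ht
    simpa using eLpNorm_add_le (hmeas t₀ ht₀) ((hmeas t ht).sub (hmeas t₀ ht₀)) hp
  have hlower : ∀ᶠ t in 𝓝[S] t₀,
      eLpNorm (u t₀) p volume - eLpNorm (u t - u t₀) p volume ≤ eLpNorm (u t) p volume := by
    filter_upwards [self_mem_nhdsWithin] with t ht
    refine tsub_le_iff_right.2 ?_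
    simpa using eLpNorm_sub_le (hmeas t ht) ((hmeas t ht).sub (hmeas t₀ ht₀)) hp
  refine tendsto_of_tendsto_of_tendsto_of_le_of_le' ?_ ?_ hlower hupper
  · simpa using ENNReal.Tendsto.sub tendsto_const_nhds hdist (Or.inr zero_ne_top)
  · simpa using tendsto_const_nhds.add hdist

theorem setLIntegral_eLpNorm_pow_lt_top (hp : 1 ≤ p) {a b : ℝ}
    (hu : ContinuousInLp p (Icc a b) u) (n : ℕ) :
    ∫⁻ s in Icc a b, eLpNorm (u s) p volume ^ n < ⊤ := by
  have hfin : ∀ s ∈ Icc a b, eLpNorm (u s) p volume ≠ ⊤ := fun s hs => (hu.1 s hs).2.ne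
  obtain ⟨M, hM⟩ := isCompact_Icc.bddAbove_image
    (ENNReal.continuousOn_toNNReal.comp (hu.continuousOn_eLpNorm hp) hfin)
  refine setLIntegral_lt_top_of_le_nnreal (by simp [Real.volume_Icc]) ⟨M ^ n, fun s hs => ?_⟩
  rw [← coe_toNNReal (hfin s hs), ← coe_pow, coe_le_coe]
  exact pow_le_pow_left₀ (by positivity) (hM (mem_image_of_mem _ hs)) n

end ContinuousInLp

theorem IsMildSolution.eLpNorm_one_le {T t : ℝ} {u₀ : E3 → ℝ} {u : ℝ → E3 → ℝ}
    (hmild : IsMildSolution T u₀ u) (ht : t ∈ Ioc 0 T) (hu₀ : AEStronglyMeasurable u₀ volume)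
    (hu : Measurable (Function.uncurry u)) :
    eLpNorm (u t) 1 volume ≤
      eLpNorm u₀ 1 volume + ∫⁻ s in Ioo 0 t, eLpNorm (u s) 3 volume ^ 3 := by
  have hduhamel : Measurable (Function.uncurry fun x s =>
      conv (heatKernel (t - s)) (fun y => u s y ^ 3) x) :=
    measurable_convolution_mul_uncurry (μ := volume) (K := fun s => heatKernel (t - s))
      (F := fun s y => u s y ^ 3) (measurable_uncurry_heatKernel.comp
        ((measurable_const.sub measurable_fst).prodMk measurable_snd)) (hu.pow_const 3)
  calc eLpNorm (u t) 1 volume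
      = eLpNorm (conv (heatKernel t) u₀ + fun x => ∫ s in Ioo 0 t,
          conv (heatKernel (t - s)) (fun y => u s y ^ 3) x) 1 volume :=
        eLpNorm_congr_ae (hmild t ht)
    _ ≤ eLpNorm (conv (heatKernel t) u₀) 1 volume + eLpNorm (fun x => ∫ s in Ioo 0 t,
          conv (heatKernel (t - s)) (fun y => u s y ^ 3) x) 1 volume :=
        eLpNorm_add_le
          (measurable_uncurry_heatKernel.of_uncurry_left.aestronglyMeasurable.convolution_mul hu₀)
          (hduhamel.stronglyMeasurable.integral_prod_right').aestronglyMeasurable le_rfl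
    _ ≤ eLpNorm u₀ 1 volume + ∫⁻ s in Ioo 0 t,
          eLpNorm (conv (heatKernel (t - s)) (fun y => u s y ^ 3)) 1 volume :=
        add_le_add (eLpNorm_one_conv_heatKernel_le ht.1 hu₀)
          (eLpNorm_one_integral_le hduhamel.aestronglyMeasurable)
    _ ≤ eLpNorm u₀ 1 volume + ∫⁻ s in Ioo 0 t, eLpNorm (u s) 3 volume ^ 3 := by
        refine add_le_add le_rfl (setLIntegral_mono' measurableSet_Ioo fun s hs => ?_)
        have hcube : eLpNorm (fun y => u s y ^ 3) 1 volume = eLpNorm (u s) 3 volume ^ 3 := by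
          exact_mod_cast eLpNorm_one_pow (u s) three_ne_zero
        exact (eLpNorm_one_conv_heatKernel_le (sub_pos.2 hs.2)
          (hu.of_uncurry_left.pow_const 3).aestronglyMeasurable).trans_eq hcube

theorem stmt_14_general (T : ℝ) (u₀ : E3 → ℝ)
    (hu₀1 : MemLp u₀ 1 volume)
    (u : ℝ → E3 → ℝ) (humeas : Measurable (Function.uncurry u))
    (hucont : ContinuousInLp 3 (Set.Icc 0 T) u) (hu0 : u 0 =ᵐ[volume] u₀)
    (hmild : IsMildSolution T u₀ u) :
    ∀ t ∈ Set.Icc (0 : ℝ) T,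
      MemLp (u t) 1 volume ∧
      eLpNorm (u t) 1 volume ≤
        eLpNorm u₀ 1 volume + ∫⁻ s in Set.Ioo (0 : ℝ) t, eLpNorm (u s) 3 volume ^ 3 := by
  intro t ht
  have hbound : eLpNorm (u t) 1 volume ≤
      eLpNorm u₀ 1 volume + ∫⁻ s in Ioo 0 t, eLpNorm (u s) 3 volume ^ 3 := by
    rcases ht.1.eq_or_lt with rfl | ht₀
    · exact (eLpNorm_congr_ae hu0).trans_le le_self_add
    · exact hmild.eLpNorm_one_le ⟨ht₀, ht.2⟩ hu₀1.1 humeas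
  have hfinite : ∫⁻ s in Ioo 0 t, eLpNorm (u s) 3 volume ^ 3 < ⊤ :=
    (lintegral_mono_set (Ioo_subset_Icc_self.trans (Icc_subset_Icc_right ht.2))).trans_lt
      (hucont.setLIntegral_eLpNorm_pow_lt_top (by norm_num) 3)
  exact ⟨⟨humeas.of_uncurry_left.aestronglyMeasurable,
    hbound.trans_lt (add_lt_top.2 ⟨hu₀1.2, hfinite⟩)⟩, hbound⟩

theorem stmt_14 (T : ℝ) (hT : 0 < T) (u₀ : E3 → ℝ)
    (hu₀1 : MemLp u₀ 1 volume) (hu₀3 : MemLp u₀ 3 volume)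
    (u : ℝ → E3 → ℝ) (humeas : Measurable (Function.uncurry u))
    (hucont : ContinuousInLp 3 (Set.Icc 0 T) u) (hu0 : u 0 =ᵐ[volume] u₀)
    (hmild : IsMildSolution T u₀ u) :
    ∀ t ∈ Set.Icc (0 : ℝ) T,
      MemLp (u t) 1 volume ∧
      eLpNorm (u t) 1 volume ≤
        eLpNorm u₀ 1 volume + ∫⁻ s in Set.Ioo (0 : ℝ) t, eLpNorm (u s) 3 volume ^ 3 :=
  stmt_14_general T u₀ hu₀1 u humeas hucont hu0 hmild
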